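/- arXiv:1206.3082 — 3 statements merged into one kernel-verified Lean document; each statement's English description precedes it below -/
import Mathlib

section
/- On a connected manifold M, each G-orbit of the isometry group G of a connected restrictively CW-homogeneous metric space structure on M is both open and closed, hence equals M. -/
/-- A Clifford-Wolf translation of a metric space: an isometry moving every point
the same distance. -/
def IsCWTranslation {M : Type*} [MetricSpace M] (ρ : M ≃ᵢ M) : Prop :=
  ∃ c : ℝ, ∀ x : M, dist x (ρ x) = c

/-- Restrictive Clifford-Wolf homogeneity. -/
def RestrictivelyCWHomogeneous (M : Type*) [MetricSpace M] : Prop :=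
  ∀ p : M, ∃ V ∈ nhds p, ∀ x₁ ∈ V, ∀ x₂ ∈ V,
    ∃ ρ : M ≃ᵢ M, IsCWTranslation ρ ∧ ρ x₁ = x₂

/-- Each orbit is open. -/
lemma orbit_open {M : Type*} [MetricSpace M] (h : RestrictivelyCWHomogeneous M) (w : M) :
    IsOpen {y : M | ∃ ρ : M ≃ᵢ M, ρ w = y} := by
  rw [isOpen_iff_mem_nhds]
  rintro y ⟨ρ, hρ⟩
  obtain ⟨V, hV, hVh⟩ := h y
  refine Filter.mem_of_superset hV ?_
  intro z hz
  obtain ⟨ρ', -, hρ'⟩ := hVh y (mem_of_mem_nhds hV) z hz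
  exact ⟨ρ.trans ρ', by simp [hρ, hρ']⟩

/-- in a connected restrictively CW-homogeneous space, each orbit of
the isometry group is open and closed, hence equals the whole space. -/
theorem stmt1 {M : Type*} [MetricSpace M] [ConnectedSpace M]
    (h : RestrictivelyCWHomogeneous M) (x : M) :
    IsOpen {y : M | ∃ ρ : M ≃ᵢ M, ρ x = y} ∧
    IsClosed {y : M | ∃ ρ : M ≃ᵢ M, ρ x = y} ∧
    {y : M | ∃ ρ : M ≃ᵢ M, ρ x = y} = Set.univ := by
  have hopen := orbit_open h x
  have hclosed : IsClosed {y : M | ∃ ρ : M ≃ᵢ M, ρ x = y} := by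
    rw [← isOpen_compl_iff, isOpen_iff_mem_nhds]
    intro y hy
    refine Filter.mem_of_superset ((orbit_open h y).mem_nhds ⟨IsometryEquiv.refl M, rfl⟩) ?_
    rintro z ⟨ρ, hρ⟩ ⟨σ, hσ⟩
    exact hy ⟨σ.trans ρ.symm, by simp [hσ, ← hρ]⟩
  refine ⟨hopen, hclosed, IsClopen.eq_univ ⟨hclosed, hopen⟩ ⟨x, IsometryEquiv.refl M, rfl⟩⟩
end

section
/- The transformation laws between the defining form (a, b) and navigation data (h, W) of a Randers metric are mutually inverse: starting from (a, b) with ‖b‖_a < 1, defining h_{ij} = (1 − ‖b‖²)(a_{ij} − b_ib_j) and W^i = −a^{ij}b_j/(1 − ‖b‖²), and then applying a_{ij}' = h_{ij}/λ + W_iW_j/λ² and b_i' = −W_i/λ with λ = 1 − h(W, W), recovers (a, b). -/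
open Matrix

/-- the transformation laws between the defining form `(a, b)` and
the navigation data `(h, W)` of a Randers metric are mutually inverse (a
pointwise linear-algebra statement).  Here `‖b‖² = b ⬝ᵥ a⁻¹ b`,
`h_{ij} = (1 - ‖b‖²)(a_{ij} - b_i b_j)`, `W = -a⁻¹ b / (1 - ‖b‖²)`,
`W_i = h_{ij} W^j`, `λ = 1 - h(W, W)`; applying
`a'_{ij} = h_{ij}/λ + W_i W_j/λ²`, `b'_i = -W_i/λ` recovers `(a, b)`. -/
theorem stmt4 {n : ℕ} (a : Matrix (Fin n) (Fin n) ℝ) (haPD : a.PosDef)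
    (b : Fin n → ℝ) (hb : b ⬝ᵥ a⁻¹.mulVec b < 1)
    (nb : ℝ) (hnb : nb = b ⬝ᵥ a⁻¹.mulVec b)
    (h : Matrix (Fin n) (Fin n) ℝ)
    (hdef : ∀ i j, h i j = (1 - nb) * (a i j - b i * b j))
    (W : Fin n → ℝ) (hWdef : W = -(1 - nb)⁻¹ • a⁻¹.mulVec b)
    (lam : ℝ) (hlam : lam = 1 - W ⬝ᵥ h.mulVec W) :
    (∀ i j, h i j / lam + (h.mulVec W i / lam) * (h.mulVec W j / lam) = a i j) ∧
    (∀ i, -(h.mulVec W i) / lam = b i) := by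
  set u := a⁻¹.mulVec b with hu
  have hne : (1 - nb) ≠ 0 := by
    have : nb < 1 := hnb ▸ hb
    linarith
  have hdet : IsUnit a.det := isUnit_iff_ne_zero.mpr haPD.det_pos.ne'
  have hab : a.mulVec u = b := by
    rw [hu, Matrix.mulVec_mulVec, Matrix.mul_nonsing_inv a hdet, Matrix.one_mulVec]
  have h1 : ∀ i, (∑ j, a i j * u j) = b i := fun i => congrFun hab i
  have h2 : (∑ j, b j * u j) = nb := by
    rw [hnb]; simp [dotProduct, hu]
  have key : ∀ i, h.mulVec W i = (nb - 1) * b i := by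
    intro i
    simp only [Matrix.mulVec, dotProduct, hdef, hWdef, Pi.smul_apply, Pi.neg_apply,
      smul_eq_mul, neg_mul]
    have step : ∀ j ∈ Finset.univ, (1 - nb) * (a i j - b i * b j) * -((1 - nb)⁻¹ * u j)
        = -(a i j * u j) + b i * (b j * u j) := by
      intro j _
      field_simp
      ring
    rw [Finset.sum_congr rfl step, Finset.sum_add_distrib, Finset.sum_neg_distrib,
      ← Finset.mul_sum, h1, h2]
    ring
  have hWb : (∑ j, W j * b j) = -(1 - nb)⁻¹ * nb := by
    rw [hWdef]
    simp only [Pi.smul_apply, Pi.neg_apply, smul_eq_mul, neg_mul]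
    rw [Finset.sum_congr rfl (fun j _ => show -((1 - nb)⁻¹ * u j * b j)
      = -((1 - nb)⁻¹ * (b j * u j)) by ring)]
    rw [Finset.sum_neg_distrib, ← Finset.mul_sum, h2]
  have hlam' : lam = 1 - nb := by
    rw [hlam]
    simp only [dotProduct]
    have : (∑ j, W j * h.mulVec W j) = ∑ j, (nb - 1) * (W j * b j) := by
      apply Finset.sum_congr rfl
      intro j _
      rw [key j]; ring
    rw [this, ← Finset.mul_sum, hWb]
    field_simp
    ring
  constructor
  · intro i j
    rw [key i, key j, hdef i j, hlam']
    field_simp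
    ring
  · intro i
    rw [key i, hlam']
    field_simp
    ring
end

section
/- Let (M, h) be a complete Riemannian manifold, X a Killing vector field of constant length 1 on M with flow φ_{X;t}, and W a Killing vector field of constant length strictly less than 1 commuting with X. Suppose every minimizing geodesic of (M, h) is a flow curve of some Killing field of constant length 1 commuting with W. If the geodesic t ↦ φ_{X;t}(x₀) is not minimizing from t = 0 to t = t₀, then there exist t' ∈ [0, t₀) and a Killing field X' of constant length 1 with [X', W] = 0 such that φ_{X;t₀}(x₀) = φ_{W;t₀−t'}(φ_{X';t'}(x₀)). -/
/-- A one-parameter group of isometries. -/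
def IsFlowOfIsometries {M : Type*} [MetricSpace M] (φ : ℝ → M ≃ᵢ M) : Prop :=
  ∀ s t : ℝ, φ (s + t) = (φ t).trans (φ s)

/-- The flow models a Killing field of constant length `1`: its orbits are
unit-speed curves, locally minimizing. -/
def UnitKilling {M : Type*} [MetricSpace M] (φ : ℝ → M ≃ᵢ M) : Prop :=
  IsFlowOfIsometries φ ∧ (∀ (x : M) (t : ℝ), dist x (φ t x) ≤ |t|) ∧
    ∀ x : M, ∃ ε > (0 : ℝ), ∀ s t : ℝ, 0 ≤ s → s ≤ t → t ≤ ε →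
      dist (φ s x) (φ t x) = t - s

/-- Two flows commute. -/
def FlowsCommute {M : Type*} [MetricSpace M] (φ ψ : ℝ → M ≃ᵢ M) : Prop :=
  ∀ (s t : ℝ) (x : M), φ s (ψ t x) = ψ t (φ s x)

/-- in a complete Riemannian CW-homogeneous space, with `X` a
Killing field of constant length 1 (flow `φX`), `W` a Killing field of constant
length `< 1` commuting with `X` (flow `φW`, with `dist x (φW t x) ≤ w·|t|`,
`w < 1`), and every minimizing geodesic the flow curve of some Killing field of
constant length 1 commuting with `W`: if the flow curve of `X` from `0` to `t₀`
is not minimizing, then `φX t₀ x₀ = φW (t₀ - t') (φX' t' x₀)` for some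
`t' ∈ [0, t₀)` and some such Killing field `X'`. -/
theorem stmt16 {M : Type*} [MetricSpace M] [CompleteSpace M]
    (φX : ℝ → M ≃ᵢ M) (hX : UnitKilling φX)
    (φW : ℝ → M ≃ᵢ M) (hWflow : IsFlowOfIsometries φW)
    (w : ℝ) (hw : w < 1) (hWlen : ∀ (x : M) (t : ℝ), dist x (φW t x) ≤ w * |t|)
    (hcomm : FlowsCommute φX φW)
    (hexhaust : ∀ x y : M, ∃ ψ : ℝ → M ≃ᵢ M, UnitKilling ψ ∧ FlowsCommute ψ φW ∧
      ψ (dist x y) x = y ∧ ∀ t : ℝ, 0 ≤ t → t ≤ dist x y → dist x (ψ t x) = t)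
    (x₀ : M) (t₀ : ℝ) (ht₀ : 0 < t₀)
    (hnotmin : dist x₀ (φX t₀ x₀) < t₀) :
    ∃ t' : ℝ, t' ∈ Set.Ico (0 : ℝ) t₀ ∧
      ∃ φX' : ℝ → M ≃ᵢ M, UnitKilling φX' ∧ FlowsCommute φX' φW ∧
        φX t₀ x₀ = φW (t₀ - t') (φX' t' x₀) := by
  set y₀ := φX t₀ x₀ with hy₀
  -- φW 0 = id
  have hW0 : ∀ x : M, φW 0 x = x := by
    intro x
    have h := hWflow 0 0
    have : φW 0 x = φW 0 (φW 0 x) := by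
      conv_lhs => rw [show (0:ℝ) = 0 + 0 by ring, h]
      rfl
    exact ((φW 0).injective this.symm)
  -- flow composition pointwise
  have hWadd : ∀ s t (x : M), φW (s + t) x = φW s (φW t x) := by
    intro s t x; rw [hWflow s t]; rfl
  -- Lipschitz bound for orbit
  have hlip : ∀ s t : ℝ, dist (φW s y₀) (φW t y₀) ≤ w * |t - s| := by
    intro s t
    have : φW t y₀ = φW s (φW (t - s) y₀) := by
      rw [← hWadd]; ring_nf
    rw [this, show φW s y₀ = φW s y₀ from rfl]
    calc dist (φW s y₀) (φW s (φW (t - s) y₀))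
        = dist y₀ (φW (t - s) y₀) := (φW s).isometry.dist_eq _ _
      _ ≤ w * |t - s| := hWlen _ _
  -- the function g
  set g : ℝ → ℝ := fun t => dist x₀ (φW (t - t₀) y₀) - t with hg
  have hcont : Continuous g := by
    have hc : Continuous fun t : ℝ => φW (t - t₀) y₀ := by
      apply (LipschitzWith.of_dist_le_mul (K := w.toNNReal)
        (f := fun t : ℝ => φW (t - t₀) y₀) ?_).continuous
      intro s t
      calc dist (φW (s - t₀) y₀) (φW (t - t₀) y₀)
          ≤ w * |(t - t₀) - (s - t₀)| := hlip _ _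
        _ ≤ (w.toNNReal : ℝ) * |(t - t₀) - (s - t₀)| :=
            mul_le_mul_of_nonneg_right (Real.le_coe_toNNReal w) (abs_nonneg _)
        _ = (w.toNNReal : ℝ) * dist s t := by
            rw [Real.dist_eq, abs_sub_comm]; ring_nf
    exact (continuous_const.dist hc).sub continuous_id
  have hgt₀ : g t₀ < 0 := by
    simp only [hg, sub_self, hW0]
    linarith
  have hg0 : 0 ≤ g 0 := by
    simp only [hg]
    have := dist_nonneg (x := x₀) (y := φW (0 - t₀) y₀)
    linarith
  -- IVT
  have hIVT := intermediate_value_Icc' ht₀.le hcont.continuousOn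
  have h0mem : (0 : ℝ) ∈ Set.Icc (g t₀) (g 0) := ⟨hgt₀.le, hg0⟩
  obtain ⟨t', ht'mem, ht'eq⟩ := hIVT h0mem
  have ht'lt : t' < t₀ := by
    rcases lt_or_eq_of_le ht'mem.2 with h | h
    · exact h
    · rw [h] at ht'eq; linarith [hgt₀, ht'eq]
  have hdist : dist x₀ (φW (t' - t₀) y₀) = t' := by
    have : dist x₀ (φW (t' - t₀) y₀) - t' = 0 := ht'eq
    linarith
  obtain ⟨ψ, hψUK, hψcomm, hψeq, -⟩ := hexhaust x₀ (φW (t' - t₀) y₀)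
  refine ⟨t', ⟨ht'mem.1, ht'lt⟩, ψ, hψUK, hψcomm, ?_⟩
  rw [hdist] at hψeq
  rw [hψeq, ← hWadd, show t₀ - t' + (t' - t₀) = 0 by ring, hW0]
end
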